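/- arXiv:2308.03215 — 4 statements merged into one kernel-verified Lean document; each statement's English description precedes it below -/
import Mathlib

section
/- Suppose 0 < η ≤ 1/5 and let N_max = 1 + η/4. Then for all N, u ∈ [0, N_max], the function f(N, u) = u(1 + η(2 - u - N))² + (N - u)(1 - ηu)² satisfies f(N, u) ≤ N_max. -/
theorem stmt_3 (η : ℝ) (hη : 0 < η) (hη' : η ≤ 1/5) :
    ∀ N u : ℝ, N ∈ Set.Icc (0 : ℝ) (1 + η/4) → u ∈ Set.Icc (0 : ℝ) (1 + η/4) →
      u * (1 + η * (2 - u - N))^2 + (N - u) * (1 - η * u)^2 ≤ 1 + η/4 := by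
  rintro N u ⟨hN0, hN1⟩ ⟨hu0, hu1⟩
  have key : 0 ≤ 1 + η - η * (u + (1 + η/4)) := by nlinarith
  -- endpoint N = 0 : f(0,u) = 4ηu(1+η-ηu)
  have h0 : u * (1 + η * (2 - u - 0))^2 + (0 - u) * (1 - η * u)^2 ≤ 1 + η/4 := by
    nlinarith [mul_nonneg (mul_nonneg hη.le (sub_nonneg.2 hu1)) key, mul_pos hη hη,
      sq_nonneg η, sq_nonneg (η*η)]
  -- endpoint N = 1+η/4
  have hM : u * (1 + η * (2 - u - (1 + η/4)))^2 + ((1 + η/4) - u) * (1 - η * u)^2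
      ≤ 1 + η/4 := by
    have ha : (0:ℝ) ≤ η/2 - η*η/16 := by nlinarith
    have hb : (0:ℝ) ≤ 1 - 3*η/4 := by linarith
    have h1 : 0 ≤ η*η*u*(η/2 - η*η/16) :=
      mul_nonneg (mul_nonneg (mul_nonneg hη.le hη.le) hu0) ha
    have h2 : 0 ≤ η*η*u*u*(1 - 3*η/4) :=
      mul_nonneg (mul_nonneg (mul_nonneg (mul_nonneg hη.le hη.le) hu0) hu0) hb
    nlinarith [h1, h2]
  -- f is quadratic in N with leading coefficient η²u ≥ 0, hence convex in N
  nlinarith [mul_nonneg (sub_nonneg.2 hN1) (sub_nonneg.2 h0),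
    mul_nonneg hN0 (sub_nonneg.2 hM),
    mul_nonneg (mul_nonneg (mul_nonneg (mul_pos hη hη).le hu0) hN0) (sub_nonneg.2 hN1),
    mul_pos hη hη]
end

section
/- Let 0 < η ≤ 1/5 and let N, u be reals with 0 ≤ u ≤ N ≤ 1 + η/4 and N ≥ 1. Define v = N - u and N' = u(1 + η(2 - 2u - v))² + v(1 - ηu)². Then N' ≥ 1. -/
theorem stmt_5 (η N u : ℝ) (hη : 0 < η) (hη' : η ≤ 1/5)
    (hu : 0 ≤ u) (huN : u ≤ N) (hN : N ≤ 1 + η/4) (hN1 : 1 ≤ N) :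
    u * (1 + η * (2 - 2*u - (N - u)))^2 + (N - u) * (1 - η * u)^2 ≥ 1 := by
  have h2 : 1 - 4*η*u ≥ 0 := by nlinarith
  have h1 : (N - 1) * (1 - 4*η*u) ≥ 0 := mul_nonneg (by linarith) h2
  have h3 : η^2*u*(2-u-N)^2 ≥ 0 := by positivity
  have h4 : η^2*u^2*(N-u) ≥ 0 := by
    have : 0 ≤ N - u := by linarith
    positivity
  nlinarith [h1, h3, h4]
end

section
/- Fix η ∈ (0, 1/4] and r ≤ 1 + η/4, r ≥ 0. Define in the variable w: f(w) = w[1 + 2η + 2w²(1 - w - ηr) + (w - 1)(w + η(2 - r))²] and g(w) = (1 + w²(1 - w - ηr))(w + η(2 - r)). Then for all w ∈ [1 - η, 1], d/dw (f(w) - g(w)) = η[η(2 - r)(r - 2 + 4w) + 6(3 - 2r)w² + 6(r - 2)w + 2] ≥ 0. -/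
/-!
`f - g` is a cubic in `w`. The bracket in its derivative equals
`η (2 - r)(r - 2 + 4w) + 2 (3w - 2)(4 - 3r) + 6 (3 - 2r)(1 - w)²`,
and every factor here is nonnegative once `0 ≤ r ≤ 4/3` and `w ≥ 2/3`; both hold on the interval
since `η ≤ 1/4`.
-/

theorem hasDerivAt_cubic (a b c d x : ℝ) :
    HasDerivAt (fun x : ℝ => a * x ^ 3 + b * x ^ 2 + c * x + d)
      (3 * a * x ^ 2 + 2 * b * x + c) x := by
  have h₃ : HasDerivAt (fun x => a * x ^ 3) (a * (3 * x ^ 2)) x := by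
    simpa using (hasDerivAt_pow 3 x).const_mul a
  have h₂ : HasDerivAt (fun x => b * x ^ 2) (b * (2 * x)) x := by
    simpa using (hasDerivAt_pow 2 x).const_mul b
  have h₁ : HasDerivAt (fun x => c * x) c x := by
    simpa using (hasDerivAt_id x).const_mul c
  exact (((h₃.add h₂).add h₁).add_const d).congr_deriv (by ring)

theorem hasDerivAt_difference (η r w : ℝ) :
    HasDerivAt (fun w : ℝ =>
        w * (1 + 2*η + 2*w^2*(1 - w - η*r) + (w - 1)*(w + η*(2 - r))^2)
        - (1 + w^2*(1 - w - η*r)) * (w + η*(2 - r)))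
      (η * (η*(2 - r)*(r - 2 + 4*w) + 6*(3 - 2*r)*w^2 + 6*(r - 2)*w + 2)) w := by
  set s := η * (2 - r)
  have hcubic : (fun w : ℝ =>
        w * (1 + 2*η + 2*w^2*(1 - w - η*r) + (w - 1)*(w + s)^2)
        - (1 + w^2*(1 - w - η*r)) * (w + s))
      = fun w => (3*s - η*r) * w^3 + (s^2 - 3*s + η*r*s) * w^2 + (2*η - s^2) * w + -s := by
    funext w; ring
  rw [hcubic]
  convert hasDerivAt_cubic _ _ _ _ w using 1
  ring

theorem difference_deriv_nonneg {η r w : ℝ} (hη : 0 ≤ η) (hr0 : 0 ≤ r) (hr : r ≤ 4/3)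
    (hw : 2/3 ≤ w) :
    0 ≤ η * (η*(2 - r)*(r - 2 + 4*w) + 6*(3 - 2*r)*w^2 + 6*(r - 2)*w + 2) := by
  have hsplit : η*(2 - r)*(r - 2 + 4*w) + 6*(3 - 2*r)*w^2 + 6*(r - 2)*w + 2
      = η*(2 - r)*(r - 2 + 4*w) + 2*(3*w - 2)*(4 - 3*r) + 6*(3 - 2*r)*(1 - w)^2 := by
    ring
  rw [hsplit]
  have h₁ : 0 ≤ η*(2 - r)*(r - 2 + 4*w) :=
    mul_nonneg (mul_nonneg hη (by linarith)) (by linarith)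
  have h₂ : 0 ≤ 2*(3*w - 2)*(4 - 3*r) := mul_nonneg (by linarith) (by linarith)
  have h₃ : 0 ≤ 6*(3 - 2*r)*(1 - w)^2 := mul_nonneg (by linarith) (sq_nonneg _)
  exact mul_nonneg hη (by linarith)

theorem stmt_16 (η r : ℝ) (hη : 0 < η) (hη' : η ≤ 1/4) (hr0 : 0 ≤ r) (hr : r ≤ 1 + η/4) :
    ∀ w ∈ Set.Icc (1 - η) 1,
      HasDerivAt (fun w : ℝ =>
          w * (1 + 2*η + 2*w^2*(1 - w - η*r) + (w - 1)*(w + η*(2 - r))^2)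
          - (1 + w^2*(1 - w - η*r)) * (w + η*(2 - r)))
        (η * (η*(2 - r)*(r - 2 + 4*w) + 6*(3 - 2*r)*w^2 + 6*(r - 2)*w + 2)) w ∧
      0 ≤ η * (η*(2 - r)*(r - 2 + 4*w) + 6*(3 - 2*r)*w^2 + 6*(r - 2)*w + 2) := by
  rintro w ⟨hw, -⟩
  exact ⟨hasDerivAt_difference η r w, difference_deriv_nonneg hη.le hr0 (by linarith) (by linarith)⟩
end

section
/- Fix m ≥ 1 and real numbers c₁, …, c_m. Let P = ∑_{i : c_i > 0} c_i² and N = ∑_{i : c_i < 0} c_i². Then -2∑_i c_i·max(c_i, 0) + (∑_i c_i²)(∑_i max(c_i, 0)²) = P² - 2P + PN, and this quantity over all choices of (c_i) is minimized exactly when P = 1 and N = 0, with minimum value -1. -/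
/-! Both `c * max c 0` and `(max c 0) ^ 2` equal `c ^ 2` on positive entries and vanish elsewhere,
while `c ^ 2` splits into its positive and negative parts; so the loss is
`P ^ 2 - 2 * P + P * N = (P - 1) ^ 2 + P * N - 1` with `P, N ≥ 0`. -/

open Finset

section PositivePart

variable {ι R : Type*} [Semiring R] [LinearOrder R]

lemma mul_max_zero_eq_ite (x : R) : x * max x 0 = if 0 < x then x ^ 2 else 0 := by
  split_ifs with hx
  · rw [max_eq_left hx.le, sq]
  · rw [max_eq_right (not_lt.mp hx), mul_zero]

lemma max_zero_sq_eq_ite (x : R) : max x 0 ^ 2 = if 0 < x then x ^ 2 else 0 := by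
  split_ifs with hx
  · rw [max_eq_left hx.le]
  · rw [max_eq_right (not_lt.mp hx), sq, mul_zero]

lemma sq_eq_ite_pos_add_ite_neg (x : R) :
    x ^ 2 = (if 0 < x then x ^ 2 else 0) + (if x < 0 then x ^ 2 else 0) := by
  rcases lt_trichotomy x 0 with hx | rfl | hx
  · simp [hx, hx.not_gt]
  · simp
  · simp [hx, hx.not_gt]

variable (s : Finset ι) (c : ι → R)

lemma Finset.sum_mul_max_zero_eq_sum_filter_pos :
    ∑ i ∈ s, c i * max (c i) 0 = ∑ i ∈ s with 0 < c i, c i ^ 2 := by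
  simp only [sum_filter, mul_max_zero_eq_ite]

lemma Finset.sum_max_zero_sq_eq_sum_filter_pos :
    ∑ i ∈ s, max (c i) 0 ^ 2 = ∑ i ∈ s with 0 < c i, c i ^ 2 := by
  simp only [sum_filter, max_zero_sq_eq_ite]

lemma Finset.sum_sq_eq_sum_filter_pos_add_sum_filter_neg :
    ∑ i ∈ s, c i ^ 2 = ∑ i ∈ s with 0 < c i, c i ^ 2 + ∑ i ∈ s with c i < 0, c i ^ 2 := by
  rw [sum_filter, sum_filter, ← sum_add_distrib]
  exact sum_congr rfl fun i _ => sq_eq_ite_pos_add_ite_neg (c i)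

end PositivePart

section Quadratic

variable {R : Type*} [CommRing R] [LinearOrder R] [IsStrictOrderedRing R] {p n : R}

lemma neg_one_le_sq_sub_two_mul_add_mul (hp : 0 ≤ p) (hn : 0 ≤ n) :
    -1 ≤ p ^ 2 - 2 * p + p * n := by
  nlinarith [sq_nonneg (p - 1), mul_nonneg hp hn]

lemma sq_sub_two_mul_add_mul_eq_neg_one_iff (hp : 0 ≤ p) (hn : 0 ≤ n) :
    p ^ 2 - 2 * p + p * n = -1 ↔ p = 1 ∧ n = 0 := by
  constructor
  · intro h
    obtain ⟨hp1, hpn⟩ := (add_eq_zero_iff_of_nonneg (sq_nonneg (p - 1)) (mul_nonneg hp hn)).1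
      (by linear_combination h)
    obtain rfl : p = 1 := sub_eq_zero.1 (pow_eq_zero_iff two_ne_zero |>.1 hp1)
    exact ⟨rfl, by simpa using hpn⟩
  · rintro ⟨rfl, rfl⟩
    norm_num

end Quadratic

theorem stmt_17_general (m : ℕ) (c : Fin m → ℝ) :
    (-2 * ∑ i, c i * max (c i) 0 + (∑ i, (c i)^2) * (∑ i, (max (c i) 0)^2)
      = (∑ i ∈ Finset.univ.filter (fun i => 0 < c i), (c i)^2)^2
        - 2 * (∑ i ∈ Finset.univ.filter (fun i => 0 < c i), (c i)^2)
        + (∑ i ∈ Finset.univ.filter (fun i => 0 < c i), (c i)^2)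
          * (∑ i ∈ Finset.univ.filter (fun i => c i < 0), (c i)^2)) ∧
    (-2 * ∑ i, c i * max (c i) 0 + (∑ i, (c i)^2) * (∑ i, (max (c i) 0)^2) ≥ -1) ∧
    (-2 * ∑ i, c i * max (c i) 0 + (∑ i, (c i)^2) * (∑ i, (max (c i) 0)^2) = -1 ↔
      (∑ i ∈ Finset.univ.filter (fun i => 0 < c i), (c i)^2) = 1 ∧
      (∑ i ∈ Finset.univ.filter (fun i => c i < 0), (c i)^2) = 0) := by
  have hP : 0 ≤ ∑ i with 0 < c i, c i ^ 2 := sum_nonneg fun i _ => sq_nonneg _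
  have hN : 0 ≤ ∑ i with c i < 0, c i ^ 2 := sum_nonneg fun i _ => sq_nonneg _
  have hloss : -2 * ∑ i, c i * max (c i) 0 + (∑ i, c i ^ 2) * ∑ i, max (c i) 0 ^ 2 =
      (∑ i with 0 < c i, c i ^ 2) ^ 2 - 2 * ∑ i with 0 < c i, c i ^ 2 +
        (∑ i with 0 < c i, c i ^ 2) * ∑ i with c i < 0, c i ^ 2 := by
    rw [sum_sq_eq_sum_filter_pos_add_sum_filter_neg, sum_mul_max_zero_eq_sum_filter_pos,
      sum_max_zero_sq_eq_sum_filter_pos]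
    ring
  rw [hloss]
  exact ⟨rfl, neg_one_le_sq_sub_two_mul_add_mul hP hN,
    sq_sub_two_mul_add_mul_eq_neg_one_iff hP hN⟩

theorem stmt_17 (m : ℕ) (hm : 1 ≤ m) (c : Fin m → ℝ) :
    (-2 * ∑ i, c i * max (c i) 0 + (∑ i, (c i)^2) * (∑ i, (max (c i) 0)^2)
      = (∑ i ∈ Finset.univ.filter (fun i => 0 < c i), (c i)^2)^2
        - 2 * (∑ i ∈ Finset.univ.filter (fun i => 0 < c i), (c i)^2)
        + (∑ i ∈ Finset.univ.filter (fun i => 0 < c i), (c i)^2)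
          * (∑ i ∈ Finset.univ.filter (fun i => c i < 0), (c i)^2)) ∧
    (-2 * ∑ i, c i * max (c i) 0 + (∑ i, (c i)^2) * (∑ i, (max (c i) 0)^2) ≥ -1) ∧
    (-2 * ∑ i, c i * max (c i) 0 + (∑ i, (c i)^2) * (∑ i, (max (c i) 0)^2) = -1 ↔
      (∑ i ∈ Finset.univ.filter (fun i => 0 < c i), (c i)^2) = 1 ∧
      (∑ i ∈ Finset.univ.filter (fun i => c i < 0), (c i)^2) = 0) :=
  stmt_17_general m c
end
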